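/- The kinetic energy of the rolling ellipsoid is invariant under the lifted SE(2) action: for all ϑ, φ, ψ ∈ ℝ, θ ∈ (0,π), and all velocities (φ̇, θ̇, ψ̇, ẋ, ẏ) ∈ ℝ⁵, one has K(φ+ϑ, θ, ψ; φ̇, θ̇, ψ̇, cos ϑ·ẋ − sin ϑ·ẏ, sin ϑ·ẋ + cos ϑ·ẏ) = K(φ, θ, ψ; φ̇, θ̇, ψ̇, ẋ, ẏ). -/
import Mathlib


open Real

/-- Height of the center of the ellipsoid above the plane. -/
noncomputable def zHeight (a b c θ ψ : ℝ) : ℝ :=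
  Real.sqrt (a ^ 2 * sin θ ^ 2 * sin ψ ^ 2 + b ^ 2 * sin θ ^ 2 * cos ψ ^ 2 +
    c ^ 2 * cos θ ^ 2)

/-- Kinetic energy of the homogeneous rolling ellipsoid of mass `m` and
semi-axes `a, b, c`, in Euler angles `(φ, θ, ψ)` and coordinates `(x, y)` of
the center, with velocities `(vφ, vθ, vψ, vx, vy)`. -/
noncomputable def kineticEnergy (a b c m : ℝ) (φ θ ψ vφ vθ vψ vx vy : ℝ) : ℝ :=
  (m / 10) * ((b ^ 2 + c ^ 2) * (vθ * cos ψ + vφ * sin ψ * sin θ) ^ 2 +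
      (a ^ 2 + c ^ 2) * (-vθ * sin ψ + vφ * cos ψ * sin θ) ^ 2 +
      (a ^ 2 + b ^ 2) * (vφ * cos θ + vψ) ^ 2) +
    (m / 2) * (vx ^ 2 + vy ^ 2 +
      (deriv (fun t => zHeight a b c t ψ) θ * vθ +
        deriv (fun t => zHeight a b c θ t) ψ * vψ) ^ 2)

/-- The kinetic energy of the rolling ellipsoid is invariant under the lifted
`SE(2)` action. -/
theorem kineticEnergy_SE2_invariant (a b c m : ℝ) (ha : 0 < a) (hb : 0 < b) (hc : 0 < c)
    (hm : 0 < m) (ϑ φ ψ : ℝ) (θ : ℝ) (hθ : θ ∈ Set.Ioo 0 π)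
    (vφ vθ vψ vx vy : ℝ) :
    kineticEnergy a b c m (φ + ϑ) θ ψ vφ vθ vψ
        (cos ϑ * vx - sin ϑ * vy) (sin ϑ * vx + cos ϑ * vy) =
      kineticEnergy a b c m φ θ ψ vφ vθ vψ vx vy := by
  unfold kineticEnergy
  have h : (cos ϑ * vx - sin ϑ * vy) ^ 2 + (sin ϑ * vx + cos ϑ * vy) ^ 2
      = vx ^ 2 + vy ^ 2 := by
    have := sin_sq_add_cos_sq ϑ
    ring_nf
    nlinarith [this]
  rw [h]
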